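/- For every norm ⦀·⦀ on ℝ^d, the following two statements are equivalent: (i) the sequence of coordinate-k norms is strictly decreasingly graded with respect to the ℓ0 pseudonorm, i.e. it is nonincreasing in k and for every l ∈ {1,…,d} and x ∈ ℝ^d, ℓ0(x) ≤ l if and only if ⦀x⦀_l = ⦀x⦀; (ii) for every k ∈ {0,…,d}, the characteristic function δ_{L_k} of the level set L_k = {x : ℓ0(x) ≤ k} is Capra-convex, i.e. (δ_{L_k})^{¢¢'} = δ_{L_k}. -/

import Mathlib

/-!
The Capra conjugate of `δ_{L_k}` is the dual coordinate-`k` norm `⦀·⦀_{k,★}`. Since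
`y ↦ ¢(x,y) - ⦀y⦀_{k,★}` is positively homogeneous, its supremum is `0` or `+∞`, so the
biconjugate is the characteristic function of `{x | ∀ y, ⟨x,y⟩ ≤ ⦀x⦀ ⦀y⦀_{k,★}}`, which for
`k ≥ 1` is `{x | ⦀x⦀_k ≤ ⦀x⦀}`. By Hahn–Banach `⦀x⦀ ≤ ⦀x⦀_k`, with equality when `ℓ0(x) ≤ k`,
and the coordinate norms are automatically nonincreasing in `k`. Hence (i) and (ii) both say that
`⦀x⦀_k = ⦀x⦀` forces `ℓ0(x) ≤ k` (for `k = 0` this holds anyway).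
-/

open scoped BigOperators

noncomputable section

/-- The Euclidean pairing `⟨x,y⟩ = ∑ i, x i * y i` on `Fin d → ℝ`. -/
def dotp {d : ℕ} (x y : Fin d → ℝ) : ℝ := ∑ i, x i * y i

/-- The coordinate subspace `R_K` of vectors vanishing outside `K`. -/
def RK {d : ℕ} (K : Finset (Fin d)) : Set (Fin d → ℝ) := {x | ∀ j ∉ K, x j = 0}

/-- Orthogonal projection onto `R_K`. -/
def projK {d : ℕ} (K : Finset (Fin d)) (x : Fin d → ℝ) : Fin d → ℝ :=
  fun i => if i ∈ K then x i else 0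

/-- The ℓ0 pseudonorm: number of nonzero components. -/
def ell0 {d : ℕ} (x : Fin d → ℝ) : ℕ := (Function.support x).ncard

/-- `N` is a norm on `ℝ^d`. -/
structure IsNorm {d : ℕ} (N : (Fin d → ℝ) → ℝ) : Prop where
  eq_zero_iff : ∀ x, N x = 0 ↔ x = 0
  smul : ∀ (c : ℝ) (x : Fin d → ℝ), N (c • x) = |c| * N x
  triangle : ∀ x y, N (x + y) ≤ N x + N y

/-- `⦀y⦀_{K,★}`: the dual norm (w.r.t. the Euclidean pairing), on the subspace `R_K`,
of the restriction of `N` to `R_K`. -/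
def restStar {d : ℕ} (N : (Fin d → ℝ) → ℝ) (K : Finset (Fin d)) (y : Fin d → ℝ) : ℝ :=
  sSup {r | ∃ x ∈ RK K, N x ≤ 1 ∧ r = dotp x y}

/-- The dual coordinate-k norm `⦀y⦀_{k,★} = sup_{|K| ≤ k} ⦀y_K⦀_{K,★}`. -/
def dualCoord {d : ℕ} (N : (Fin d → ℝ) → ℝ) (k : ℕ) (y : Fin d → ℝ) : ℝ :=
  sSup {r | ∃ K : Finset (Fin d), K.card ≤ k ∧ r = restStar N K (projK K y)}

/-- The coordinate-k norm: the dual norm of the dual coordinate-k norm. -/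
def coordNorm {d : ℕ} (N : (Fin d → ℝ) → ℝ) (k : ℕ) (x : Fin d → ℝ) : ℝ :=
  sSup {r | ∃ y : Fin d → ℝ, dualCoord N k y ≤ 1 ∧ r = dotp x y}

/-- The Capra coupling `¢(x,y) = ⟨x,y⟩/⦀x⦀` (with `¢(0,y) = 0`). -/
def capra {d : ℕ} (N : (Fin d → ℝ) → ℝ) (x y : Fin d → ℝ) : ℝ :=
  if x = 0 then 0 else dotp x y / N x

/-- Capra conjugate `f^¢(y) = sup_x ( ¢(x,y) ∔ (−f(x)) )`.
(EReal addition is the Moreau lower addition: `⊤ + ⊥ = ⊥`.) -/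
def capraConj {d : ℕ} (N : (Fin d → ℝ) → ℝ) (f : (Fin d → ℝ) → EReal)
    (y : Fin d → ℝ) : EReal :=
  ⨆ x : Fin d → ℝ, ((capra N x y : ℝ) : EReal) + (- f x)

/-- Capra biconjugate `f^{¢¢'}(x) = sup_y ( ¢(x,y) ∔ (−f^¢(y)) )`. -/
def capraBiconj {d : ℕ} (N : (Fin d → ℝ) → ℝ) (f : (Fin d → ℝ) → EReal)
    (x : Fin d → ℝ) : EReal :=
  ⨆ y : Fin d → ℝ, ((capra N x y : ℝ) : EReal) + (- capraConj N f y)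

/-- Fenchel conjugate `g^★(y) = sup_x ( ⟨x,y⟩ ∔ (−g(x)) )`. -/
def fenchelConj {d : ℕ} (g : (Fin d → ℝ) → EReal) (y : Fin d → ℝ) : EReal :=
  ⨆ x : Fin d → ℝ, ((dotp x y : ℝ) : EReal) + (- g x)

open Classical in
/-- Characteristic function of a set: `0` on `C`, `+∞` outside. -/
def indic {d : ℕ} (C : Set (Fin d → ℝ)) : (Fin d → ℝ) → EReal :=
  fun x => if x ∈ C then 0 else ⊤

namespace IsNorm

variable {d : ℕ} {N : (Fin d → ℝ) → ℝ}

lemma map_zero (hN : IsNorm N) : N 0 = 0 := (hN.eq_zero_iff 0).2 rfl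

lemma nonneg (hN : IsNorm N) (x : Fin d → ℝ) : 0 ≤ N x := by
  have h := hN.triangle x (-x)
  have hneg : N (-x) = N x := by simpa using hN.smul (-1) x
  rw [add_neg_cancel, hN.map_zero, hneg] at h
  linarith

lemma pos (hN : IsNorm N) {x : Fin d → ℝ} (hx : x ≠ 0) : 0 < N x :=
  (hN.nonneg x).lt_of_ne fun h => hx ((hN.eq_zero_iff x).1 h.symm)

lemma smul_of_nonneg (hN : IsNorm N) {c : ℝ} (hc : 0 ≤ c) (x : Fin d → ℝ) :
    N (c • x) = c * N x := by
  rw [hN.smul, abs_of_nonneg hc]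

lemma convexOn (hN : IsNorm N) : ConvexOn ℝ Set.univ N :=
  ⟨convex_univ, fun x _ y _ a b ha hb _ => by
    simpa only [hN.smul_of_nonneg ha, hN.smul_of_nonneg hb, smul_eq_mul]
      using hN.triangle (a • x) (b • y)⟩

lemma continuous (hN : IsNorm N) : Continuous N :=
  continuousOn_univ.1 (hN.convexOn.continuousOn isOpen_univ)

lemma exists_pos_mul_norm_le (hN : IsNorm N) : ∃ c > 0, ∀ x : Fin d → ℝ, c * ‖x‖ ≤ N x := by
  obtain ⟨c, hc, hcN⟩ := (isCompact_sphere (0 : Fin d → ℝ) 1).exists_forall_le'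
    hN.continuous.continuousOn (a := 0) fun z hz =>
      hN.pos (ne_zero_of_mem_unit_sphere (⟨z, hz⟩ : Metric.sphere (0 : Fin d → ℝ) 1))
  refine ⟨c, hc, fun x => ?_⟩
  rcases eq_or_ne x 0 with rfl | hx
  · simp [hN.map_zero]
  have hnx : 0 < ‖x‖ := norm_pos_iff.2 hx
  have := hcN (‖x‖⁻¹ • x) (by simpa using norm_smul_inv_norm (𝕜 := ℝ) hx)
  rw [hN.smul_of_nonneg (inv_nonneg.2 hnx.le), inv_mul_eq_div, le_div_iff₀ hnx] at this
  linarith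

lemma exists_dotp_eq_and_le (hN : IsNorm N) (x : Fin d → ℝ) :
    ∃ y : Fin d → ℝ, dotp x y = N x ∧ ∀ z, dotp z y ≤ N z := by
  let f : (Fin d → ℝ) →ₗ.[ℝ] ℝ := LinearPMap.mkSpanSingleton' x (N x) fun c hc => by
    rcases eq_or_ne c 0 with rfl | hc0
    · simp
    · simp [(smul_eq_zero.1 hc).resolve_left hc0, hN.map_zero]
  obtain ⟨g, hgf, hgN⟩ := exists_extension_of_le_sublinear f N
    (fun c hc x => hN.smul_of_nonneg hc.le x) hN.triangle (by
      rintro ⟨z, hz⟩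
      obtain ⟨c, rfl⟩ := Submodule.mem_span_singleton.1 hz
      rw [LinearPMap.mkSpanSingleton'_apply, hN.smul, smul_eq_mul]
      exact mul_le_mul_of_nonneg_right (le_abs_self c) (hN.nonneg x))
  have hg : ∀ z, g z = dotp z (fun i => g (Pi.single i 1)) := fun z => by
    rw [LinearMap.pi_apply_eq_sum_univ g z, dotp]
    refine Finset.sum_congr rfl fun i _ => ?_
    rw [smul_eq_mul]
    congr 2
    ext j
    rw [Pi.single_comm, Pi.single_apply]
  refine ⟨fun i => g (Pi.single i 1), ?_, fun z => (hg z).symm ▸ hgN z⟩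
  rw [← hg, hgf ⟨x, Submodule.mem_span_singleton_self x⟩]
  exact LinearPMap.mkSpanSingleton'_apply_self _ _ _ _

end IsNorm

section Coordinates

variable {d : ℕ}

lemma dotp_eq_dotProduct (x y : Fin d → ℝ) : dotp x y = x ⬝ᵥ y := rfl

lemma dotp_smul_left (t : ℝ) (x y : Fin d → ℝ) : dotp (t • x) y = t * dotp x y :=
  smul_dotProduct t x y

lemma dotp_smul_right (t : ℝ) (x y : Fin d → ℝ) : dotp x (t • y) = t * dotp x y :=
  dotProduct_smul t x y

lemma eq_zero_of_dotp_self_nonpos {x : Fin d → ℝ} (hx : dotp x x ≤ 0) : x = 0 :=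
  dotProduct_self_eq_zero.1 (hx.antisymm (Finset.sum_nonneg fun i _ => mul_self_nonneg (x i)))

lemma dotp_le_norm_mul (x y : Fin d → ℝ) : dotp x y ≤ ‖x‖ * ∑ i, |y i| := by
  rw [dotp, Finset.mul_sum]
  refine Finset.sum_le_sum fun i _ => ?_
  calc x i * y i ≤ |x i| * |y i| := by rw [← abs_mul]; exact le_abs_self _
    _ ≤ ‖x‖ * |y i| := by
      gcongr
      exact (Real.norm_eq_abs (x i)).symm.trans_le (norm_le_pi_norm x i)

lemma dotp_projK {K : Finset (Fin d)} {x : Fin d → ℝ} (hx : x ∈ RK K) (y : Fin d → ℝ) :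
    dotp x (projK K y) = dotp x y := by
  refine Finset.sum_congr rfl fun i _ => ?_
  by_cases hi : i ∈ K <;> simp [projK, hi, hx i]

lemma ell0_eq_zero_iff {x : Fin d → ℝ} : ell0 x = 0 ↔ x = 0 := by
  rw [ell0, Set.ncard_eq_zero, Function.support_eq_empty_iff]

lemma ell0_le_card_of_mem_RK {K : Finset (Fin d)} {x : Fin d → ℝ} (hx : x ∈ RK K) :
    ell0 x ≤ K.card := by
  rw [ell0, ← Set.ncard_coe_finset K]
  exact Set.ncard_le_ncard fun j hj => by_contra fun hjK => hj (hx j hjK)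

lemma exists_mem_RK_card_eq_ell0 (x : Fin d → ℝ) :
    ∃ K : Finset (Fin d), K.card = ell0 x ∧ x ∈ RK K := by
  classical
  refine ⟨(Function.support x).toFinset, (Set.ncard_eq_toFinset_card' _).symm, fun j hj => ?_⟩
  simpa using hj

lemma ell0_smul_le (c : ℝ) (x : Fin d → ℝ) : ell0 (c • x) ≤ ell0 x :=
  Set.ncard_le_ncard (Function.support_const_smul_subset c x)

lemma ell0_single_le_one (i : Fin d) (a : ℝ) : ell0 (Pi.single i a) ≤ 1 :=
  (Set.ncard_le_ncard Pi.support_single_subset).trans (Set.ncard_singleton i).le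

end Coordinates

section DualCoord

variable {d : ℕ} {N : (Fin d → ℝ) → ℝ} {k : ℕ} {K : Finset (Fin d)} {x y : Fin d → ℝ} {a : ℝ}

lemma IsNorm.bddAbove_dotp_unitBall (hN : IsNorm N) (K : Finset (Fin d)) (y : Fin d → ℝ) :
    BddAbove {r | ∃ x ∈ RK K, N x ≤ 1 ∧ r = dotp x y} := by
  obtain ⟨c, hc, hcN⟩ := hN.exists_pos_mul_norm_le
  refine ⟨c⁻¹ * ∑ i, |y i|, ?_⟩
  rintro _ ⟨x, -, hx, rfl⟩
  have hnorm : ‖x‖ ≤ c⁻¹ := by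
    rw [← one_div, le_div_iff₀' hc]
    exact (hcN x).trans hx
  exact (dotp_le_norm_mul x y).trans (by gcongr)

lemma dotp_le_restStar (hN : IsNorm N) (hx : x ∈ RK K) (h1 : N x ≤ 1) :
    dotp x y ≤ restStar N K y :=
  le_csSup (hN.bddAbove_dotp_unitBall K y) ⟨x, hx, h1, rfl⟩

lemma restStar_le (hN : IsNorm N) (h : ∀ x ∈ RK K, N x ≤ 1 → dotp x y ≤ a) :
    restStar N K y ≤ a :=
  csSup_le ⟨_, 0, fun _ _ => rfl, hN.map_zero.trans_le zero_le_one, rfl⟩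
    fun _ ⟨x, hx, h1, hr⟩ => hr ▸ h x hx h1

lemma dotp_le_dualCoord (hN : IsNorm N) (hx : ell0 x ≤ k) (h1 : N x ≤ 1) :
    dotp x y ≤ dualCoord N k y := by
  obtain ⟨K, hK, hxK⟩ := exists_mem_RK_card_eq_ell0 x
  have hfin : Set.Finite {r | ∃ K : Finset (Fin d), K.card ≤ k ∧ r = restStar N K (projK K y)} :=
    (Set.finite_range fun K : Finset (Fin d) => restStar N K (projK K y)).subset
      fun _ ⟨L, _, hr⟩ => ⟨L, hr.symm⟩
  calc dotp x y = dotp x (projK K y) := (dotp_projK hxK y).symm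
    _ ≤ restStar N K (projK K y) := dotp_le_restStar hN hxK h1
    _ ≤ dualCoord N k y := le_csSup hfin.bddAbove ⟨K, hK ▸ hx, rfl⟩

lemma dualCoord_le (hN : IsNorm N) (h : ∀ x, ell0 x ≤ k → N x ≤ 1 → dotp x y ≤ a) :
    dualCoord N k y ≤ a :=
  csSup_le ⟨_, ∅, Nat.zero_le k, rfl⟩ fun _ ⟨_, hK, hr⟩ => hr ▸ restStar_le hN fun x hx h1 =>
    dotp_projK hx y ▸ h x ((ell0_le_card_of_mem_RK hx).trans hK) h1

lemma dualCoord_nonneg (hN : IsNorm N) : 0 ≤ dualCoord N k y := by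
  simpa [dotp] using dotp_le_dualCoord (y := y) hN
    ((ell0_eq_zero_iff.2 rfl).trans_le (Nat.zero_le k)) (hN.map_zero.trans_le zero_le_one)

lemma dotp_le_mul_dualCoord (hN : IsNorm N) (hx : ell0 x ≤ k) (y : Fin d → ℝ) :
    dotp x y ≤ N x * dualCoord N k y := by
  rcases eq_or_ne x 0 with rfl | hx0
  · simp [dotp, hN.map_zero]
  have hNx := hN.pos hx0
  have h := dotp_le_dualCoord (y := y) hN ((ell0_smul_le (N x)⁻¹ x).trans hx)
    (by rw [hN.smul_of_nonneg (inv_nonneg.2 hNx.le), inv_mul_cancel₀ hNx.ne'])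
  rwa [dotp_smul_left, inv_mul_le_iff₀ hNx] at h

lemma dualCoord_smul_le (hN : IsNorm N) {t : ℝ} (ht : 0 ≤ t) (y : Fin d → ℝ) :
    dualCoord N k (t • y) ≤ t * dualCoord N k y :=
  dualCoord_le hN fun x hx h1 => by
    rw [dotp_smul_right]
    exact mul_le_mul_of_nonneg_left (dotp_le_dualCoord hN hx h1) ht

lemma dualCoord_smul (hN : IsNorm N) {t : ℝ} (ht : 0 ≤ t) (y : Fin d → ℝ) :
    dualCoord N k (t • y) = t * dualCoord N k y := by
  refine (dualCoord_smul_le hN ht y).antisymm ?_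
  rcases ht.eq_or_lt with rfl | ht
  · simpa using dualCoord_nonneg hN
  have := dualCoord_smul_le (k := k) hN (inv_nonneg.2 ht.le) (t • y)
  rwa [inv_smul_smul₀ ht.ne', ← div_eq_inv_mul, le_div_iff₀' ht] at this

lemma dualCoord_zero (hN : IsNorm N) : dualCoord N k 0 = 0 := by
  simpa using dualCoord_smul (k := k) hN le_rfl 0

lemma dualCoord_mono (hN : IsNorm N) {l : ℕ} (hkl : k ≤ l) (y : Fin d → ℝ) :
    dualCoord N k y ≤ dualCoord N l y :=
  dualCoord_le hN fun _ hx h1 => dotp_le_dualCoord hN (hx.trans hkl) h1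

end DualCoord

section CoordNorm

variable {d : ℕ} {N : (Fin d → ℝ) → ℝ} {k : ℕ} {x y : Fin d → ℝ} {a : ℝ}

lemma dotp_le_sum_mul_dualCoord (hN : IsNorm N) (hk : 1 ≤ k) (x y : Fin d → ℝ) :
    dotp x y ≤ (∑ i, N (Pi.single i (x i))) * dualCoord N k y := by
  rw [Finset.sum_mul, dotp]
  refine Finset.sum_le_sum fun i _ => ?_
  have h := dotp_le_mul_dualCoord hN ((ell0_single_le_one i (x i)).trans hk) y
  rwa [dotp_eq_dotProduct, single_dotProduct] at h

lemma eq_zero_of_dualCoord_eq_zero (hN : IsNorm N) (hk : 1 ≤ k) (hy : dualCoord N k y = 0) :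
    y = 0 := by
  have h := dotp_le_sum_mul_dualCoord hN hk y y
  rw [hy, mul_zero] at h
  exact eq_zero_of_dotp_self_nonpos h

-- Needs `1 ≤ k`: `dualCoord N 0 = 0`, so for `x ≠ 0` the set defining `coordNorm N 0 x` is all
-- of `ℝ` and its `sSup` is the junk value `0`.
lemma dotp_le_coordNorm (hN : IsNorm N) (hk : 1 ≤ k) (hy : dualCoord N k y ≤ 1) :
    dotp x y ≤ coordNorm N k x :=
  le_csSup ⟨∑ i, N (Pi.single i (x i)), fun _ ⟨z, hz, hr⟩ => hr ▸
      (dotp_le_sum_mul_dualCoord hN hk x z).trans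
        (mul_le_of_le_one_right (Finset.sum_nonneg fun _ _ => hN.nonneg _) hz)⟩
    ⟨y, hy, rfl⟩

lemma coordNorm_le (hN : IsNorm N) (h : ∀ y, dualCoord N k y ≤ 1 → dotp x y ≤ a) :
    coordNorm N k x ≤ a :=
  csSup_le ⟨_, 0, dualCoord_le hN fun z _ _ => by simp [dotp], rfl⟩
    fun _ ⟨y, hy, hr⟩ => hr ▸ h y hy

lemma dotp_le_coordNorm_mul (hN : IsNorm N) (hk : 1 ≤ k) (x y : Fin d → ℝ) :
    dotp x y ≤ coordNorm N k x * dualCoord N k y := by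
  rcases (dualCoord_nonneg (k := k) (y := y) hN).eq_or_lt with h0 | hpos
  · obtain rfl := eq_zero_of_dualCoord_eq_zero hN hk h0.symm
    rw [← h0, mul_zero]
    simp [dotp]
  have h := dotp_le_coordNorm (x := x) hN hk
    (by rw [dualCoord_smul hN (inv_nonneg.2 hpos.le), inv_mul_cancel₀ hpos.ne'] :
      dualCoord N k ((dualCoord N k y)⁻¹ • y) ≤ 1)
  rwa [dotp_smul_right, inv_mul_le_iff₀ hpos, mul_comm] at h

lemma le_coordNorm (hN : IsNorm N) (hk : 1 ≤ k) (x : Fin d → ℝ) : N x ≤ coordNorm N k x := by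
  obtain ⟨y, hxy, hy⟩ := hN.exists_dotp_eq_and_le x
  exact hxy ▸ dotp_le_coordNorm hN hk (dualCoord_le hN fun z _ hz => (hy z).trans hz)

lemma coordNorm_antitone (hN : IsNorm N) {l : ℕ} (hk : 1 ≤ k) (hkl : k ≤ l) (x : Fin d → ℝ) :
    coordNorm N l x ≤ coordNorm N k x :=
  coordNorm_le hN fun _ hy => dotp_le_coordNorm hN hk ((dualCoord_mono hN hkl _).trans hy)

lemma forall_dotp_le_mul_dualCoord_iff (hN : IsNorm N) (hk : 1 ≤ k) :
    (∀ y, dotp x y ≤ N x * dualCoord N k y) ↔ coordNorm N k x = N x := by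
  refine ⟨fun h => (coordNorm_le hN fun y hy => ?_).antisymm (le_coordNorm hN hk x),
    fun h y => h ▸ dotp_le_coordNorm_mul hN hk x y⟩
  exact (h y).trans (mul_le_of_le_one_right (hN.nonneg x) hy)

end CoordNorm

lemma iSup_coe_eq_zero_of_le {E : Type*} {g : E → ℝ} {y₀ : E} (hy₀ : g y₀ = 0)
    (hg : ∀ y, g y ≤ 0) : ⨆ y, (g y : EReal) = 0 :=
  le_antisymm (iSup_le fun y => EReal.coe_nonpos.2 (hg y))
    (le_iSup_of_le y₀ (by rw [hy₀, EReal.coe_zero]))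

lemma iSup_coe_eq_top_of_pos {E : Type*} [AddCommGroup E] [Module ℝ E] {g : E → ℝ}
    (hg : ∀ t : ℝ, 0 ≤ t → ∀ y, g (t • y) = t * g y) {y : E}
    (hy : 0 < g y) : ⨆ y, (g y : EReal) = ⊤ := by
  refine (EReal.eq_top_iff_forall_lt _).2 fun M => lt_iSup_iff.2 ⟨((|M| + 1) / g y) • y, ?_⟩
  rw [hg _ (by positivity), div_mul_cancel₀ _ hy.ne', EReal.coe_lt_coe_iff]
  linarith [le_abs_self M]

section Capra

variable {d : ℕ} {N : (Fin d → ℝ) → ℝ} {x y : Fin d → ℝ}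

lemma capra_smul_right (t : ℝ) : capra N x (t • y) = t * capra N x y := by
  unfold capra
  split_ifs
  · rw [mul_zero]
  · rw [dotp_smul_right, mul_div_assoc]

lemma capra_le_iff (hN : IsNorm N) {c : ℝ} (hc : 0 ≤ c) :
    capra N x y ≤ c ↔ dotp x y ≤ N x * c := by
  unfold capra
  split_ifs with hx
  · simp [hx, hc, dotp, hN.map_zero]
  · rw [div_le_iff₀' (hN.pos hx)]

lemma coe_capra_le_capraConj_indic {C : Set (Fin d → ℝ)} (hx : x ∈ C) (y : Fin d → ℝ) :
    (capra N x y : EReal) ≤ capraConj N (indic C) y :=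
  le_iSup_of_le x (by simp [indic, hx])

lemma capraConj_indic_ell0_le (hN : IsNorm N) (k : ℕ) (y : Fin d → ℝ) :
    capraConj N (indic {x | ell0 x ≤ k}) y = dualCoord N k y := by
  refine le_antisymm (iSup_le fun x => ?_) ?_
  · by_cases hx : ell0 x ≤ k
    · simpa [indic, hx] using
        (capra_le_iff hN (dualCoord_nonneg hN)).2 (dotp_le_mul_dualCoord hN hx y)
    · simp [indic, hx]
  refine EReal.le_of_forall_lt_iff_le.1 fun r hr =>
    EReal.coe_le_coe_iff.2 (dualCoord_le hN fun x hx h1 => EReal.coe_le_coe_iff.1 ?_)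
  refine le_trans ?_ hr.le
  rcases le_or_gt (dotp x y) 0 with hxy | hxy
  · refine (EReal.coe_le_coe_iff.2 hxy).trans ?_
    simpa [capra] using coe_capra_le_capraConj_indic (N := N) (C := {x | ell0 x ≤ k})
      (x := 0) (by simp [ell0_eq_zero_iff.2]) y
  · have hx0 : x ≠ 0 := by rintro rfl; simp [dotp] at hxy
    refine (EReal.coe_le_coe_iff.2 ?_).trans (coe_capra_le_capraConj_indic hx y)
    rw [capra, if_neg hx0]
    exact le_div_self hxy.le (hN.pos hx0) h1

end Capra

section Biconj

variable {d : ℕ} {N : (Fin d → ℝ) → ℝ}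

lemma capraBiconj_indic_ell0_le (hN : IsNorm N) (k : ℕ) :
    capraBiconj N (indic {x | ell0 x ≤ k})
      = indic {x | ∀ y, dotp x y ≤ N x * dualCoord N k y} := by
  funext x
  have hsup : capraBiconj N (indic {x | ell0 x ≤ k}) x
      = ⨆ y, ((capra N x y - dualCoord N k y : ℝ) : EReal) := by
    rw [capraBiconj]
    congr! with y
    rw [capraConj_indic_ell0_le hN, EReal.coe_sub, sub_eq_add_neg]
  have hle : ∀ y, capra N x y - dualCoord N k y ≤ 0 ↔ dotp x y ≤ N x * dualCoord N k y :=
    fun y => sub_nonpos.trans (capra_le_iff hN (dualCoord_nonneg hN))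
  by_cases hx : ∀ y, dotp x y ≤ N x * dualCoord N k y
  · have hzero : capra N x 0 - dualCoord N k 0 = 0 := by
      simpa [dualCoord_zero hN] using capra_smul_right (N := N) (x := x) 0 (y := 0)
    rw [hsup, iSup_coe_eq_zero_of_le (g := fun y => capra N x y - dualCoord N k y) hzero
      fun y => (hle y).2 (hx y)]
    simp [indic, hx]
  · obtain ⟨y, hy⟩ := not_forall.1 hx
    have hhom : ∀ t : ℝ, 0 ≤ t → ∀ y,
        capra N x (t • y) - dualCoord N k (t • y) = t * (capra N x y - dualCoord N k y) :=
      fun t ht y => by rw [capra_smul_right, dualCoord_smul hN ht, mul_sub]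
    rw [hsup, iSup_coe_eq_top_of_pos (g := fun y => capra N x y - dualCoord N k y) hhom
      (not_le.1 fun h => hy ((hle y).1 h))]
    simp [indic, hx]

lemma indic_injective : Function.Injective (indic (d := d)) := by
  intro C D h
  ext x
  have hx := congrFun h x
  by_cases hC : x ∈ C <;> by_cases hD : x ∈ D <;> simp_all [indic]

lemma capraBiconj_indic_ell0_le_eq_iff (hN : IsNorm N) (k : ℕ) :
    capraBiconj N (indic {x | ell0 x ≤ k}) = indic {x | ell0 x ≤ k} ↔
      ∀ x, (∀ y, dotp x y ≤ N x * dualCoord N k y) → ell0 x ≤ k := by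
  rw [capraBiconj_indic_ell0_le hN, indic_injective.eq_iff]
  exact ⟨fun h x hx => (h ▸ hx : x ∈ {x | ell0 x ≤ k}), fun h => Set.Subset.antisymm h
    fun x hx y => dotp_le_mul_dualCoord hN hx y⟩

end Biconj

lemma ell0_le_zero_of_forall_dotp_le {d : ℕ} {N : (Fin d → ℝ) → ℝ} (hN : IsNorm N)
    {x : Fin d → ℝ} (hx : ∀ y, dotp x y ≤ N x * dualCoord N 0 y) : ell0 x ≤ 0 := by
  have hdual : dualCoord N 0 x ≤ 0 := dualCoord_le hN fun z hz _ => by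
    simp [ell0_eq_zero_iff.1 (Nat.le_zero.1 hz), dotp]
  have hxx := (hx x).trans (mul_nonpos_of_nonneg_of_nonpos (hN.nonneg x) hdual)
  rw [eq_zero_of_dotp_self_nonpos hxx, ell0_eq_zero_iff.2 rfl]

theorem statement16 {d : ℕ} (N : (Fin d → ℝ) → ℝ) (hN : IsNorm N) :
    ((∀ (x : Fin d → ℝ) (k l : ℕ), 1 ≤ k → k ≤ l → l ≤ d →
          coordNorm N l x ≤ coordNorm N k x) ∧
        ∀ l : ℕ, 1 ≤ l → l ≤ d →
          ∀ x : Fin d → ℝ, (ell0 x ≤ l ↔ coordNorm N l x = N x))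
      ↔ ∀ k : ℕ, k ≤ d →
          capraBiconj N (indic {x : Fin d → ℝ | ell0 x ≤ k})
            = indic {x : Fin d → ℝ | ell0 x ≤ k} := by
  simp only [capraBiconj_indic_ell0_le_eq_iff hN]
  constructor
  · rintro ⟨-, hiff⟩ k hkd x hx
    rcases Nat.eq_zero_or_pos k with rfl | hk
    · exact ell0_le_zero_of_forall_dotp_le hN hx
    · exact (hiff k hk hkd x).2 ((forall_dotp_le_mul_dualCoord_iff hN hk).1 hx)
  · refine fun h => ⟨fun x k l hk hkl _ => coordNorm_antitone hN hk hkl x,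
      fun l hl hld x => ⟨fun hx => ?_, fun hx => ?_⟩⟩
    · exact (forall_dotp_le_mul_dualCoord_iff hN hl).1 (dotp_le_mul_dualCoord hN hx)
    · exact h l hld x ((forall_dotp_le_mul_dualCoord_iff hN hl).2 hx)
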